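/- If S_n are nonnegative random variables with S_n → 0 in probability and r_n → ∞, then (1/r_n) log E[(1−min(S_n,1))^{r_n/2}] → 0. -/

import Mathlib

/-!
The integrand `(1 - min (S n) 1) ^ (r n / 2)` lies in `[0, 1]`, so the logarithm of its expectation
is at most `0`. Conversely, on the event `|S n| ≤ ε`, whose probability exceeds `1 / 2` for large
`n`, the integrand is at least `(1 - ε) ^ (r n / 2)`; hence
`(1 / r n) log E ≥ (1 / r n) log (1 / 2) + log (1 - ε) / 2`, whose lower limit `log (1 - ε) / 2`
tends to `0` with `ε`.
-/

open MeasureTheory Filter Set Real Topology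

theorem tendsto_one_div_mul_log_of_pow_le {ι : Type*} {l : Filter ι} {I r : ι → ℝ} {c : ℝ}
    (hr : Tendsto r l atTop) (hc : 0 < c) (hle : ∀ᶠ i in l, I i ≤ 1)
    (hlow : ∀ q ∈ Ioo (0 : ℝ) 1, ∀ᶠ i in l, c * q ^ r i ≤ I i) :
    Tendsto (fun i => 1 / r i * log (I i)) l (𝓝 0) := by
  have hr_pos : ∀ᶠ i in l, 0 < r i := hr.eventually_gt_atTop 0
  have h_one_div_r : Tendsto (fun i => 1 / r i) l (𝓝 0) :=
    hr.inv_tendsto_atTop.congr fun i => (one_div (r i)).symm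
  refine tendsto_order.2 ⟨fun a ha => ?_, fun a ha => ?_⟩
  · -- with `q = exp (a / 2)`, `log I ≥ log c + r a / 2`, and `log c / r → 0`
    have hq : exp (a / 2) ∈ Ioo (0 : ℝ) 1 := ⟨exp_pos _, exp_lt_one_iff.2 (by linarith)⟩
    have hlog_c : ∀ᶠ i in l, a / 2 < 1 / r i * log c := by
      have h : Tendsto (fun i => 1 / r i * log c) l (𝓝 0) := by
        simpa using h_one_div_r.mul_const (log c)
      exact h.eventually_const_lt (by linarith)
    filter_upwards [hr_pos, hlow _ hq, hlog_c] with i hri hI hci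
    have hcq : 0 < c * exp (a / 2) ^ r i := by positivity
    have hlog : log c + r i * (a / 2) ≤ log (I i) := by
      calc log c + r i * (a / 2) = log (c * exp (a / 2) ^ r i) := by
            rw [log_mul hc.ne' (by positivity), log_rpow (exp_pos _), log_exp]
        _ ≤ log (I i) := log_le_log hcq hI
    calc a < 1 / r i * log c + a / 2 := by linarith
      _ = 1 / r i * (log c + r i * (a / 2)) := by field_simp
      _ ≤ 1 / r i * log (I i) := by gcongr
  · have hI_nonneg : ∀ᶠ i in l, 0 ≤ I i := by
      filter_upwards [hlow (1 / 2) ⟨by norm_num, by norm_num⟩] with i hi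
      exact le_trans (by positivity) hi
    filter_upwards [hr_pos, hle, hI_nonneg] with i hri hI1 hI0
    exact (mul_nonpos_of_nonneg_of_nonpos (by positivity) (log_nonpos hI0 hI1)).trans_lt ha

theorem one_sub_min_one_rpow_nonneg (x t : ℝ) : 0 ≤ (1 - min x 1) ^ t :=
  rpow_nonneg (by linarith [min_le_right x 1]) t

theorem one_sub_min_one_rpow_le_one {x t : ℝ} (hx : 0 ≤ x) (ht : 0 ≤ t) :
    (1 - min x 1) ^ t ≤ 1 :=
  rpow_le_one (by linarith [min_le_right x 1]) (by linarith [le_min hx zero_le_one]) ht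

theorem rpow_le_one_sub_min_one_rpow {x ε t : ℝ} (hε : ε ≤ 1) (hx : |x| ≤ ε) (ht : 0 ≤ t) :
    (1 - ε) ^ t ≤ (1 - min x 1) ^ t :=
  rpow_le_rpow (by linarith) (by linarith [min_le_left x 1, le_abs_self x]) ht

section

variable {Ω : Type*} [MeasurableSpace Ω] {P : Measure Ω} [IsProbabilityMeasure P] {X : Ω → ℝ}
  {t : ℝ}

theorem integral_one_sub_min_one_rpow_le_one (hX : 0 ≤ᵐ[P] X) (ht : 0 ≤ t) :
    ∫ ω, (1 - min (X ω) 1) ^ t ∂P ≤ 1 := by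
  calc ∫ ω, (1 - min (X ω) 1) ^ t ∂P ≤ ∫ _, (1 : ℝ) ∂P :=
        integral_mono_of_nonneg (.of_forall fun ω => one_sub_min_one_rpow_nonneg _ _)
          (integrable_const 1) (hX.mono fun ω hω => one_sub_min_one_rpow_le_one hω ht)
    _ = 1 := by simp

theorem integrable_one_sub_min_one_rpow (hXm : Measurable X) (hX : 0 ≤ᵐ[P] X) (ht : 0 ≤ t) :
    Integrable (fun ω => (1 - min (X ω) 1) ^ t) P := by
  refine .of_bound (by fun_prop) 1 (hX.mono fun ω hω => ?_)
  rw [norm_of_nonneg (one_sub_min_one_rpow_nonneg _ _)]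
  exact one_sub_min_one_rpow_le_one hω ht

theorem rpow_mul_one_sub_measureReal_le_integral (hXm : Measurable X) (hX : 0 ≤ᵐ[P] X)
    (ht : 0 ≤ t) {ε : ℝ} (hε : ε ≤ 1) :
    (1 - ε) ^ t * (1 - P.real {ω | ε < |X ω|}) ≤ ∫ ω, (1 - min (X ω) 1) ^ t ∂P := by
  have h_subset : {ω | ε < |X ω|}ᶜ ⊆ {ω | (1 - ε) ^ t ≤ (1 - min (X ω) 1) ^ t} :=
    fun ω hω => rpow_le_one_sub_min_one_rpow hε (not_lt.1 hω) ht
  calc (1 - ε) ^ t * (1 - P.real {ω | ε < |X ω|})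
      = (1 - ε) ^ t * P.real {ω | ε < |X ω|}ᶜ := by
        rw [probReal_compl_eq_one_sub (measurableSet_lt measurable_const (by fun_prop))]
    _ ≤ (1 - ε) ^ t * P.real {ω | (1 - ε) ^ t ≤ (1 - min (X ω) 1) ^ t} := by
        gcongr
        finiteness
    _ ≤ ∫ ω, (1 - min (X ω) 1) ^ t ∂P :=
        mul_meas_ge_le_integral_of_nonneg (.of_forall fun ω => one_sub_min_one_rpow_nonneg _ _)
          (integrable_one_sub_min_one_rpow hXm hX ht) _

end

theorem log_expectation_tendsto_zero_general
    {Ω : Type*} [MeasurableSpace Ω] {P : Measure Ω} [IsProbabilityMeasure P]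
    (S : ℕ → Ω → ℝ) (hmeas : ∀ n, Measurable (S n)) (hnn : ∀ n, ∀ᵐ ω ∂P, 0 ≤ S n ω)
    (hprob : ∀ ε : ℝ, 0 < ε →
        Tendsto (fun n => P {ω | ε < |S n ω|}) atTop (nhds 0))
    (r : ℕ → ℝ) (hr : Tendsto r atTop atTop) :
    Tendsto
      (fun n => (1 / r n) *
        Real.log (∫ ω, (1 - min (S n ω) 1) ^ (r n / 2) ∂P))
      atTop (nhds 0) := by
  have hr_half : ∀ᶠ n in atTop, 0 ≤ r n / 2 := by
    filter_upwards [hr.eventually_ge_atTop 0] with n hn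
    positivity
  refine tendsto_one_div_mul_log_of_pow_le hr one_half_pos ?_ fun q hq => ?_
  · filter_upwards [hr_half] with n hn
    exact integral_one_sub_min_one_rpow_le_one (hnn n) hn
  · -- with `ε = 1 - q ^ 2` the lower bound reads `(q ^ 2) ^ (r / 2) = q ^ r`
    have hε : 0 < 1 - q ^ 2 := by nlinarith [hq.1, hq.2]
    have hsmall : ∀ᶠ n in atTop, P.real {ω | 1 - q ^ 2 < |S n ω|} < 1 / 2 := by
      have h := (ENNReal.tendsto_toReal ENNReal.zero_ne_top).comp (hprob _ hε)
      exact h.eventually_lt_const (by norm_num)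
    filter_upwards [hr_half, hsmall] with n hn hPn
    calc 1 / 2 * q ^ r n = (q ^ 2) ^ (r n / 2) * (1 - 1 / 2) := by
          rw [← rpow_natCast_mul hq.1.le]
          ring_nf
      _ ≤ (1 - (1 - q ^ 2)) ^ (r n / 2) * (1 - P.real {ω | 1 - q ^ 2 < |S n ω|}) := by
          rw [sub_sub_cancel]
          gcongr
      _ ≤ ∫ ω, (1 - min (S n ω) 1) ^ (r n / 2) ∂P :=
          rpow_mul_one_sub_measureReal_le_integral (hmeas n) (hnn n) hn
            (by linarith [sq_nonneg q])

/-- If `S_n ≥ 0` converge to `0` in probability and `r_n → ∞`, then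
`(1/r_n) log E[(1 − min(S_n,1))^{r_n/2}] → 0`. -/
theorem log_expectation_tendsto_zero
    {Ω : Type*} [MeasurableSpace Ω] {P : Measure Ω} [IsProbabilityMeasure P]
    (S : ℕ → Ω → ℝ) (hmeas : ∀ n, Measurable (S n)) (hnn : ∀ n, ∀ᵐ ω ∂P, 0 ≤ S n ω)
    (hprob : ∀ ε : ℝ, 0 < ε →
        Tendsto (fun n => P {ω | ε < |S n ω|}) atTop (nhds 0))
    (r : ℕ → ℝ) (hrpos : ∀ n, 0 < r n) (hr : Tendsto r atTop atTop) :
    Tendsto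
      (fun n => (1 / r n) *
        Real.log (∫ ω, (1 - min (S n ω) 1) ^ (r n / 2) ∂P))
      atTop (nhds 0) :=
  log_expectation_tendsto_zero_general S hmeas hnn hprob r hr
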